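/- arXiv:1601.00609 — 2 statements merged into one kernel-verified Lean document; each statement's English description precedes it below -/
import Mathlib

section
/- Let z ≥ 0 and let (δ_k) be a sequence of positive numbers. For each k let X_{δ_k,1}, X_{δ_k,2}, … be iid real random variables with mean 0 and variance σ²(δ_k), with sup_k σ²(δ_k) < ∞, and let S_{δ_k,n} denote the n-th partial sum. Then for every ε > 0 there exists T > 0 such that for all k, P( min_{n ≥ T/δ_k²} δ_k (S_{δ_k,n} + n δ_k) ≤ z ) < ε. -/
/-!
If `δ (S_n + n δ) ≤ z` and `n δ² ≥ T ≥ 2z`, then `|S_n| ≥ n δ / 2`. Split the range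
`n ≥ N := ⌈T / δ²⌉` into the blocks `[N 4^j, N 4^(j+1))`. Since `S` is a martingale, `|S|` is a
submartingale, and Doob's maximal inequality with `E|S_m| ≤ √(m V)` bounds the probability
that `|S_n|` reaches `N 4^j δ / 2` on block `j` by `4 √V / (2^j √T)`. The geometric series sums to
`8 √V / √T`, a bound that no longer depends on `δ`.
-/

open MeasureTheory ProbabilityTheory Finset

theorem Nat.exists_mul_pow_le_lt_mul_pow_succ {b N n : ℕ} (hb : 1 < b) (hN : 0 < N)
    (hNn : N ≤ n) : ∃ j, N * b ^ j ≤ n ∧ n < N * b ^ (j + 1) := by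
  refine ⟨Nat.log b (n / N), ?_, ?_⟩
  · calc N * b ^ Nat.log b (n / N) ≤ N * (n / N) :=
          Nat.mul_le_mul_left N (Nat.pow_log_le_self b (Nat.div_pos hNn hN).ne')
      _ ≤ n := Nat.mul_div_le n N
  · rw [Nat.mul_comm, ← Nat.div_lt_iff_lt_mul hN]
    exact Nat.lt_pow_succ_log_self hb _

theorem Real.sqrt_four_mul_mul_div_eq {M d : ℝ} (hM : 0 < M) (hd : 0 < d) (V : ℝ) :
    √(4 * M * V) / (M * d / 2) = 4 * √V / √(M * d ^ 2) := by
  have hsM : 0 < √M := Real.sqrt_pos.mpr hM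
  rw [Real.sqrt_mul (by positivity), Real.sqrt_mul (by positivity), Real.sqrt_mul hM.le,
    Real.sqrt_sq hd.le, show √4 = 2 by norm_num [Real.sqrt_eq_iff_mul_self_eq_of_pos]]
  nth_rw 2 [← Real.mul_self_sqrt hM.le]
  field_simp
  ring

section

variable {Ω : Type*} {mΩ : MeasurableSpace Ω} {μ : Measure Ω}

theorem integral_abs_le_sqrt_integral_sq [IsProbabilityMeasure μ] {f : Ω → ℝ}
    (hf : MemLp f 2 μ) : ∫ ω, |f ω| ∂μ ≤ √(∫ ω, f ω ^ 2 ∂μ) := by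
  refine Real.le_sqrt_of_sq_le ?_
  have h := variance_nonneg |f| μ
  rw [variance_eq_sub hf.abs] at h
  simpa only [Pi.pow_apply, Pi.abs_apply, sq_abs, sub_nonneg] using h

theorem ProbabilityTheory.iIndepFun.martingale_sum_range_succ {X : ℕ → Ω → ℝ}
    (hX : ∀ i, StronglyMeasurable (X i)) (hindep : iIndepFun X μ)
    (hint : ∀ i, Integrable (X i) μ) (hmean : ∀ i, μ[X i] = 0) :
    Martingale (fun n => ∑ i ∈ range (n + 1), X i) (Filtration.natural X hX) μ := by
  have := hindep.isProbabilityMeasure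
  refine martingale_of_condExp_sub_eq_zero_nat (fun n => ?_)
    (fun n => integrable_finsetSum' _ fun i _ => hint i) (fun n => ?_)
  · exact Finset.stronglyMeasurable_sum _ fun i hi =>
      (Filtration.stronglyAdapted_natural hX).stronglyMeasurable_le
        (Nat.lt_succ_iff.mp (mem_range.mp hi))
  · rw [sum_range_succ_sub_sum]
    exact (hindep.condExp_natural_ae_eq_of_lt hX n.lt_succ_self).trans (by rw [hmean]; rfl)

theorem MeasureTheory.Martingale.measure_exists_le_abs_le [IsFiniteMeasure μ]
    {ℱ : Filtration ℕ mΩ} {M : ℕ → Ω → ℝ} (hM : Martingale M ℱ μ) {c : ℝ} (hc : 0 < c) (m : ℕ) :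
    μ {ω | ∃ k ≤ m, c ≤ |M k ω|} ≤ ENNReal.ofReal ((∫ ω, |M m ω| ∂μ) / c) := by
  have hsub : Submartingale (M ⊔ -M) ℱ μ := hM.submartingale.sup hM.neg.submartingale
  have hnonneg : 0 ≤ M ⊔ -M := fun n ω => abs_nonneg (M n ω)
  set D := {ω | (c.toNNReal : ℝ) ≤
    (range (m + 1)).sup' nonempty_range_add_one fun k => (M ⊔ -M) k ω}
  have hsubset : {ω | ∃ k ≤ m, c ≤ |M k ω|} ⊆ D := by
    rintro ω ⟨k, hkm, hck⟩
    rw [Set.mem_ofPred_eq, Real.coe_toNNReal _ hc.le]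
    exact hck.trans (le_sup' (fun k => (M ⊔ -M) k ω) (mem_range_succ_iff.mpr hkm))
  have hD : ENNReal.ofReal c * μ D ≤ ENNReal.ofReal (∫ ω, |M m ω| ∂μ) :=
    (maximal_ineq hsub hnonneg m).trans <| ENNReal.ofReal_le_ofReal <|
      setIntegral_le_integral (hM.integrable m).abs (.of_forall fun ω => abs_nonneg _)
  rw [ENNReal.ofReal_div_of_pos hc, ENNReal.le_div_iff_mul_le (.inl (by simpa using hc))
    (.inl ENNReal.ofReal_ne_top), mul_comm]
  exact le_trans (by gcongr) hD

theorem ProbabilityTheory.iIndepFun.measure_exists_le_abs_sum_range_le {X : ℕ → Ω → ℝ}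
    (hX : ∀ i, Measurable (X i)) (hindep : iIndepFun X μ) (hL2 : ∀ i, MemLp (X i) 2 μ)
    (hmean : ∀ i, μ[X i] = 0) {V : ℝ} (hvar : ∀ i, variance (X i) μ ≤ V) {c : ℝ} (hc : 0 < c)
    (m : ℕ) :
    μ {ω | ∃ n ≤ m, c ≤ |∑ i ∈ range n, X i ω|} ≤ ENNReal.ofReal (√(m * V) / c) := by
  have := hindep.isProbabilityMeasure
  cases m with
  | zero => simp [hc.not_ge]
  | succ m =>
    set S : ℕ → Ω → ℝ := fun k => ∑ i ∈ range (k + 1), X i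
    have hS : Martingale S _ μ := hindep.martingale_sum_range_succ
      (fun i => (hX i).stronglyMeasurable) (fun i => (hL2 i).integrable one_le_two) hmean
    have hsubset : {ω | ∃ n ≤ m + 1, c ≤ |∑ i ∈ range n, X i ω|} ⊆
        {ω | ∃ k ≤ m, c ≤ |S k ω|} := by
      rintro ω ⟨n, hn, hcn⟩
      cases n with
      | zero => simp [hc.not_ge] at hcn
      | succ k => exact ⟨k, by omega, by simpa only [S, Finset.sum_apply] using hcn⟩
    have hSL2 : MemLp (S m) 2 μ := memLp_finsetSum' _ fun i _ => hL2 i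
    have hvarS : variance (S m) μ ≤ (m + 1 : ℕ) * V := by
      rw [IndepFun.variance_sum (fun i _ => hL2 i) fun i _ j _ hij => hindep.indepFun hij]
      simpa using sum_le_sum fun i (_ : i ∈ range (m + 1)) => hvar i
    have hmeanS : μ[S m] = 0 := by
      simp only [S, Finset.sum_apply]
      rw [integral_finsetSum _ fun i _ => (hL2 i).integrable one_le_two]
      exact sum_eq_zero fun i _ => hmean i
    refine (measure_mono hsubset).trans <| (hS.measure_exists_le_abs_le hc m).trans ?_
    gcongr
    calc ∫ ω, |S m ω| ∂μ ≤ √(∫ ω, S m ω ^ 2 ∂μ) := integral_abs_le_sqrt_integral_sq hSL2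
      _ = √(variance (S m) μ) := by rw [variance_of_integral_eq_zero hSL2.aemeasurable hmeanS]
      _ ≤ √((m + 1 : ℕ) * V) := Real.sqrt_le_sqrt hvarS

theorem ProbabilityTheory.iIndepFun.measure_exists_mul_sum_range_add_le_le {X : ℕ → Ω → ℝ}
    (hX : ∀ i, Measurable (X i)) (hindep : iIndepFun X μ) (hL2 : ∀ i, MemLp (X i) 2 μ)
    (hmean : ∀ i, μ[X i] = 0) {V : ℝ} (hvar : ∀ i, variance (X i) μ ≤ V) {d T z : ℝ}
    (hd : 0 < d) (hT : 0 < T) (hzT : 2 * z ≤ T) :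
    μ {ω | ∃ n : ℕ, T / d ^ 2 ≤ n ∧ d * (∑ i ∈ range n, X i ω + n * d) ≤ z} ≤
      ENNReal.ofReal (8 * √V / √T) := by
  set N := ⌈T / d ^ 2⌉₊
  have hN : 0 < N := Nat.ceil_pos.mpr (by positivity)
  have hTN : T ≤ N * d ^ 2 := (div_le_iff₀ (by positivity)).mp (Nat.le_ceil _)
  set A : ℕ → Set Ω := fun j =>
    {ω | ∃ n ≤ 4 * (N * 4 ^ j), (N * 4 ^ j : ℕ) * d / 2 ≤ |∑ i ∈ range n, X i ω|}
  have hcover : {ω | ∃ n : ℕ, T / d ^ 2 ≤ n ∧ d * (∑ i ∈ range n, X i ω + n * d) ≤ z} ⊆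
      ⋃ j, A j := by
    rintro ω ⟨n, hTn, hnz⟩
    obtain ⟨j, hjn, hnj⟩ := Nat.exists_mul_pow_le_lt_mul_pow_succ (by norm_num : 1 < 4) hN
      (Nat.ceil_le.mpr hTn)
    have hzn : 2 * z ≤ n * d ^ 2 := hzT.trans ((div_le_iff₀ (by positivity)).mp hTn)
    have hdrift : n * d / 2 ≤ -∑ i ∈ range n, X i ω := by
      have : d * (n * d / 2 + ∑ i ∈ range n, X i ω) ≤ 0 := by nlinarith
      linarith [nonpos_of_mul_nonpos_right this hd]
    have hblock_len : N * 4 ^ (j + 1) = 4 * (N * 4 ^ j) := by ring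
    refine Set.mem_iUnion.mpr ⟨j, n, by omega, ?_⟩
    have : ((N * 4 ^ j : ℕ) : ℝ) ≤ n := by exact_mod_cast hjn
    calc ((N * 4 ^ j : ℕ) : ℝ) * d / 2 ≤ n * d / 2 := by gcongr
      _ ≤ |∑ i ∈ range n, X i ω| := hdrift.trans (neg_le_abs _)
  have hblock : ∀ j, μ (A j) ≤ ENNReal.ofReal (8 * √V / √T / 2 / 2 ^ j) := by
    intro j
    have hM : (0 : ℝ) < (N * 4 ^ j : ℕ) := by positivity
    refine (hindep.measure_exists_le_abs_sum_range_le hX hL2 hmean hvar (by positivity) _).trans ?_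
    apply ENNReal.ofReal_le_ofReal
    have hTM : T * 4 ^ j ≤ (N * 4 ^ j : ℕ) * d ^ 2 := by
      calc T * 4 ^ j ≤ N * d ^ 2 * 4 ^ j := by gcongr
        _ = (N * 4 ^ j : ℕ) * d ^ 2 := by push_cast; ring
    calc √(((4 * (N * 4 ^ j) : ℕ) : ℝ) * V) / ((N * 4 ^ j : ℕ) * d / 2)
        = 4 * √V / √((N * 4 ^ j : ℕ) * d ^ 2) := by
          rw [← Real.sqrt_four_mul_mul_div_eq hM hd]; push_cast; ring_nf
      _ ≤ 4 * √V / √(T * 4 ^ j) := by gcongr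
      _ = 8 * √V / √T / 2 / 2 ^ j := by
          have h4 : (4 : ℝ) ^ j = (2 ^ j) ^ 2 := by rw [← pow_mul, mul_comm, pow_mul]; norm_num
          rw [Real.sqrt_mul hT.le, h4, Real.sqrt_sq (by positivity)]
          ring
  calc _ ≤ ∑' j, μ (A j) := (measure_mono hcover).trans (measure_iUnion_le A)
    _ ≤ ∑' j : ℕ, ENNReal.ofReal (8 * √V / √T / 2 / 2 ^ j) := ENNReal.tsum_le_tsum hblock
    _ = ENNReal.ofReal (8 * √V / √T) := by
      rw [← ENNReal.ofReal_tsum_of_nonneg (fun j => by positivity) (summable_geometric_two' _),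
        tsum_geometric_two']

end

theorem uniform_tightness_bound_for_shifted_walks_general
    {Ω : Type*} [MeasureSpace Ω] [IsProbabilityMeasure (ℙ : Measure Ω)]
    (z : ℝ) (δ : ℕ → ℝ) (hδ : ∀ k, 0 < δ k)
    (X : ℕ → ℕ → Ω → ℝ) (v : ℕ → ℝ)
    (hmeas : ∀ k i, Measurable (X k i))
    (hindep : ∀ k, iIndepFun (X k) ℙ)
    (hident : ∀ k i, IdentDistrib (X k i) (X k 0) ℙ ℙ)
    (hL2 : ∀ k, MemLp (X k 0) 2 ℙ)
    (hmean : ∀ k, (∫ ω, X k 0 ω) = 0)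
    (hvar : ∀ k, variance (X k 0) ℙ = v k)
    (hbdd : ∃ C : ℝ, ∀ k, v k ≤ C) :
    ∀ ε : ℝ, 0 < ε → ∃ T : ℝ, 0 < T ∧ ∀ k,
      (ℙ {ω | ∃ n : ℕ, T / (δ k) ^ 2 ≤ (n : ℝ) ∧
          δ k * ((∑ i ∈ Finset.range n, X k i ω) + n * δ k) ≤ z}).toReal < ε := by
  obtain ⟨C, hC⟩ := hbdd
  intro ε hε
  set T := max (2 * z) ((8 * √C / ε) ^ 2 + 1)
  have hT : 0 < T := lt_max_of_lt_right (by positivity)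
  have hCT : 8 * √C / √T < ε := by
    have : 8 * √C / ε < √T := Real.lt_sqrt_of_sq_lt ((lt_add_one _).trans_le (le_max_right _ _))
    rw [div_lt_iff₀ (by positivity)]
    rw [div_lt_iff₀ hε] at this
    linarith
  refine ⟨T, hT, fun k => ENNReal.toReal_lt_of_lt_ofReal ?_⟩
  refine lt_of_le_of_lt ?_ ((ENNReal.ofReal_lt_ofReal_iff hε).mpr hCT)
  exact (hindep k).measure_exists_mul_sum_range_add_le_le (hmeas k)
    (fun i => (hident k i).memLp_iff.mpr (hL2 k))
    (fun i => (hident k i).integral_eq.trans (hmean k))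
    (fun i => ((hident k i).variance_eq.trans (hvar k)).trans_le (hC k)) (hδ k) hT (le_max_left _ _)

/-- Uniform tightness bound: for centered walks `S_{δ_k,n}` with uniformly bounded variances,
for every `ε > 0` there is `T` such that for all `k`,
`P(min_{n ≥ T/δ_k²} δ_k (S_{δ_k,n} + n δ_k) ≤ z) < ε`. -/
theorem uniform_tightness_bound_for_shifted_walks
    {Ω : Type*} [MeasureSpace Ω] [IsProbabilityMeasure (ℙ : Measure Ω)]
    (z : ℝ) (hz : 0 ≤ z) (δ : ℕ → ℝ) (hδ : ∀ k, 0 < δ k)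
    (X : ℕ → ℕ → Ω → ℝ) (v : ℕ → ℝ)
    (hmeas : ∀ k i, Measurable (X k i))
    (hindep : ∀ k, iIndepFun (X k) ℙ)
    (hident : ∀ k i, IdentDistrib (X k i) (X k 0) ℙ ℙ)
    (hL2 : ∀ k, MemLp (X k 0) 2 ℙ)
    (hmean : ∀ k, (∫ ω, X k 0 ω) = 0)
    (hvar : ∀ k, variance (X k 0) ℙ = v k)
    (hbdd : ∃ C : ℝ, ∀ k, v k ≤ C) :
    ∀ ε : ℝ, 0 < ε → ∃ T : ℝ, 0 < T ∧ ∀ k,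
      (ℙ {ω | ∃ n : ℕ, T / (δ k) ^ 2 ≤ (n : ℝ) ∧
          δ k * ((∑ i ∈ Finset.range n, X k i ω) + n * δ k) ≤ z}).toReal < ε :=
  uniform_tightness_bound_for_shifted_walks_general z δ hδ X v hmeas hindep hident hL2 hmean hvar
    hbdd
end

section
/- Let S_n = X₁ + ⋯ + X_n be a random walk with iid real steps, R = inf{n ≥ 1 : S_n < 0} with generating function r(z) = E[z^R; R < ∞], and W = inf{n ≥ 1 : S_n ≥ 0} with generating function a(z) = E[z^W; W < ∞]. Then (1 − r(z))(1 − a(z)) = 1 − z for all real z with |z| < 1. -/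
open MeasureTheory ProbabilityTheory Set

variable {Ω : Type*} [MeasureSpace Ω]

/-- The partial sums `S_n = X₁ + ⋯ + X_n` of a random walk. -/
def walkSum (X : ℕ → Ω → ℝ) (n : ℕ) (ω : Ω) : ℝ := ∑ i ∈ Finset.range n, X i ω

/-- The (possibly defective) probability generating function `r(z) = E[z^R; R < ∞]` of the
first strictly descending ladder epoch `R = inf {n ≥ 1 : S_n < 0}`. -/
noncomputable def descLadderPGF (X : ℕ → Ω → ℝ) (z : ℝ) : ℝ :=
  ∑' n : ℕ, z ^ n * (ℙ {ω | 1 ≤ n ∧ walkSum X n ω < 0 ∧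
      ∀ m, 1 ≤ m → m < n → 0 ≤ walkSum X m ω}).toReal

/-- The (possibly defective) probability generating function `a(z) = E[z^W; W < ∞]` of the
first weakly ascending ladder epoch `W = inf {n ≥ 1 : S_n ≥ 0}`. -/
noncomputable def ascLadderPGF (X : ℕ → Ω → ℝ) (z : ℝ) : ℝ :=
  ∑' n : ℕ, z ^ n * (ℙ {ω | 1 ≤ n ∧ 0 ≤ walkSum X n ω ∧
      ∀ m, 1 ≤ m → m < n → walkSum X m ω < 0}).toReal

/-!
Split the path `S_0, …, S_n` at the first time `k` at which it attains its minimum: before `k` the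
path stays strictly above `S_k`, after `k` weakly above it. Seen from `S_k`, the first event says
that the walk with steps `X_{k-1}, …, X_0` stays negative for `k` steps, the second that the walk
with steps `X_k, X_{k+1}, …` stays nonnegative for `n - k` steps. They concern disjoint blocks of
iid steps, so `∑_k v_k u_{n-k} = 1` with `v_k = ℙ(S_1, …, S_k < 0)` and
`u_m = ℙ(S_1, …, S_m ≥ 0)`, i.e. `V(z) U(z) = 1 / (1 - z)` for their generating functions. On the
other hand the first exit probabilities are differences of consecutive staying probabilities, so
`1 - r(z) = (1 - z) U(z)` and `1 - a(z) = (1 - z) V(z)`.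
-/

namespace RandomWalk

lemma identDistrib_comp_of_injective {α ι β : Type*} [MeasurableSpace α] [MeasurableSpace β]
    {P : Measure α} {X : ι → α → β} (hmeas : ∀ i, Measurable (X i)) (hindep : iIndepFun X P)
    {i₀ : ι} (hident : ∀ i, IdentDistrib (X i) (X i₀) P P) {g : ι → ι} (hg : g.Injective) :
    IdentDistrib (fun ω i => X (g i) ω) (fun ω i => X i ω) P P where
  aemeasurable_fst := (measurable_pi_lambda _ fun i => hmeas (g i)).aemeasurable
  aemeasurable_snd := (measurable_pi_lambda _ hmeas).aemeasurable
  map_eq := by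
    rw [(hindep.precomp hg).map_fun_eq_infinitePi_map fun i => hmeas (g i),
      hindep.map_fun_eq_infinitePi_map hmeas]
    congr 1
    funext i
    rw [(hident (g i)).map_eq, (hident i).map_eq]

def partialSumsIn (A : Set ℝ) (n : ℕ) : Set (ℕ → ℝ) :=
  {x | ∀ m, 1 ≤ m → m ≤ n → ∑ i ∈ Finset.range m, x i ∈ A}

lemma partialSumsIn_zero (A : Set ℝ) : partialSumsIn A 0 = univ := by
  ext x
  simp only [partialSumsIn, mem_ofPred_eq, mem_univ, iff_true]
  omega

lemma partialSumsIn_succ (A : Set ℝ) (n : ℕ) :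
    partialSumsIn A (n + 1) = partialSumsIn A n ∩ {x | ∑ i ∈ Finset.range (n + 1), x i ∈ A} := by
  ext x
  simp only [partialSumsIn, mem_inter_iff, mem_ofPred_eq]
  refine ⟨fun h => ⟨fun m h1 h2 => h m h1 (by omega), h _ (by omega) le_rfl⟩,
    fun ⟨h, hn⟩ m h1 h2 => ?_⟩
  rcases Nat.lt_or_ge m (n + 1) with hm | hm
  · exact h m h1 (by omega)
  · rwa [show m = n + 1 by omega]

lemma measurableSet_preimage_partialSumsIn {α : Type*} {m : MeasurableSpace α}
    {Y : ℕ → α → ℝ} {n : ℕ} (hY : ∀ i < n, Measurable[m] (Y i)) {A : Set ℝ}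
    (hA : MeasurableSet A) :
    MeasurableSet[m] ((fun ω i => Y i ω) ⁻¹' partialSumsIn A n) := by
  have : (fun ω i => Y i ω) ⁻¹' partialSumsIn A n
      = ⋂ k, ⋂ (_ : 1 ≤ k), ⋂ (_ : k ≤ n), (fun ω => ∑ i ∈ Finset.range k, Y i ω) ⁻¹' A := by
    ext ω
    simp [partialSumsIn]
  rw [this]
  refine .iInter fun k => .iInter fun _ => .iInter fun hk => ?_
  exact Finset.measurable_sum _ (fun i hi => hY i ((Finset.mem_range.mp hi).trans_le hk)) hA

lemma measurableSet_partialSumsIn {A : Set ℝ} (hA : MeasurableSet A) (n : ℕ) :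
    MeasurableSet (partialSumsIn A n) :=
  measurableSet_preimage_partialSumsIn (Y := fun i (x : ℕ → ℝ) => x i)
    (fun i _ => measurable_pi_apply i) hA

def revBelow (k i : ℕ) : ℕ := if i < k then k - 1 - i else i

lemma revBelow_injective (k : ℕ) : (revBelow k).Injective := by
  intro i j h
  unfold revBelow at h
  split_ifs at h <;> omega

lemma sum_range_revBelow (x : ℕ → ℝ) {k m : ℕ} (hm : m ≤ k) :
    ∑ i ∈ Finset.range m, x (revBelow k i)
      = ∑ i ∈ Finset.range k, x i - ∑ i ∈ Finset.range (k - m), x i := by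
  induction m with
  | zero => simp
  | succ m ih =>
    have hsplit : ∑ i ∈ Finset.range (k - m), x i
        = ∑ i ∈ Finset.range (k - (m + 1)), x i + x (k - 1 - m) := by
      rw [show k - m = k - (m + 1) + 1 by omega, Finset.sum_range_succ]
      congr 2
      omega
    rw [Finset.sum_range_succ, ih (by omega), revBelow, if_pos (by omega), hsplit]
    ring

lemma sum_range_shift (x : ℕ → ℝ) (k m : ℕ) :
    ∑ i ∈ Finset.range m, x (k + i)
      = ∑ i ∈ Finset.range (k + m), x i - ∑ i ∈ Finset.range k, x i := by
  rw [Finset.sum_range_add]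
  ring

lemma revBelow_mem_partialSumsIn_iff {x : ℕ → ℝ} {A : Set ℝ} {k : ℕ} :
    (fun i => x (revBelow k i)) ∈ partialSumsIn A k ↔
      ∀ j < k, ∑ i ∈ Finset.range k, x i - ∑ i ∈ Finset.range j, x i ∈ A := by
  simp only [partialSumsIn, mem_ofPred_eq]
  constructor
  · intro h j hj
    simpa [sum_range_revBelow x (Nat.sub_le k j), Nat.sub_sub_self hj.le]
      using h (k - j) (by omega) (Nat.sub_le k j)
  · intro h m h1 h2
    rw [sum_range_revBelow x h2]
    exact h _ (by omega)

lemma shift_mem_partialSumsIn_iff {x : ℕ → ℝ} {A : Set ℝ} {k l : ℕ} :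
    (fun i => x (k + i)) ∈ partialSumsIn A l ↔
      ∀ j, k < j → j ≤ k + l → ∑ i ∈ Finset.range j, x i - ∑ i ∈ Finset.range k, x i ∈ A := by
  simp only [partialSumsIn, mem_ofPred_eq, sum_range_shift]
  constructor
  · intro h j h1 h2
    simpa [Nat.add_sub_cancel' h1.le] using h (j - k) (by omega) (by omega)
  · intro h m h1 h2
    exact h _ (by omega) (by omega)

lemma existsUnique_firstArgmin (s : ℕ → ℝ) (n : ℕ) :
    ∃! k, k ≤ n ∧ (∀ j < k, s k < s j) ∧ ∀ j, k < j → j ≤ n → s k ≤ s j := by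
  classical
  have hmin : ∃ k, k ≤ n ∧ ∀ j ≤ n, s k ≤ s j := by
    obtain ⟨k, hk, h⟩ := Finset.exists_min_image (Finset.range (n + 1)) s ⟨0, by simp⟩
    exact ⟨k, by simpa [Nat.lt_succ_iff] using hk, fun j hj => h j (by simpa [Nat.lt_succ_iff])⟩
  obtain ⟨hkn, hk⟩ := Nat.find_spec hmin
  refine ⟨Nat.find hmin, ⟨hkn, fun j hj => ?_, fun j _ hj => hk j hj⟩, ?_⟩
  · by_contra! hle
    exact Nat.find_min hmin hj ⟨by omega, fun i hi => hle.trans (hk i hi)⟩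
  · rintro k ⟨hkn', hleft, hright⟩
    rcases lt_trichotomy k (Nat.find hmin) with hlt | heq | hlt
    · refine absurd ⟨hkn', fun j hj => ?_⟩ (Nat.find_min hmin hlt)
      rcases lt_trichotomy j k with hjk | rfl | hjk
      exacts [(hleft j hjk).le, le_rfl, hright j hjk hj]
    · exact heq
    · exact absurd (hk k hkn') (not_le.2 (hleft _ hlt))

lemma sum_measureReal_eq_one_of_existsUnique {α ι : Type*} [MeasurableSpace α]
    {μ : Measure α} [IsProbabilityMeasure μ] {s : Finset ι} {E : ι → Set α}
    (hE : ∀ i ∈ s, MeasurableSet (E i)) (h : ∀ a, ∃! i, i ∈ s ∧ a ∈ E i) :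
    ∑ i ∈ s, μ.real (E i) = 1 := by
  have hdisj : PairwiseDisjoint (s : Set ι) E := fun i hi j hj hij =>
    disjoint_left.2 fun a hai haj => hij ((h a).unique ⟨hi, hai⟩ ⟨hj, haj⟩)
  have hcover : (⋃ i ∈ s, E i) = univ := eq_univ_of_forall fun a =>
    let ⟨i, ⟨hi, ha⟩, _⟩ := h a
    mem_biUnion hi ha
  rw [← measureReal_biUnion_finset hdisj hE, hcover, probReal_univ]

lemma summable_pow_mul_of_abs_le {u : ℕ → ℝ} {C : ℝ} (hu : ∀ n, |u n| ≤ C) {z : ℝ}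
    (hz : |z| < 1) : Summable fun n => ‖z ^ n * u n‖ := by
  refine .of_nonneg_of_le (fun n => norm_nonneg _) (fun n => ?_)
    ((summable_geometric_of_lt_one (abs_nonneg z) hz).mul_right C)
  rw [Real.norm_eq_abs, abs_mul, abs_pow]
  exact mul_le_mul_of_nonneg_left (hu n) (by positivity)

lemma one_sub_tsum_pow_mul_eq {u p : ℕ → ℝ} {C : ℝ} (hu : ∀ n, |u n| ≤ C) (hu0 : u 0 = 1)
    (hp0 : p 0 = 0) (hp : ∀ n, p (n + 1) = u n - u (n + 1)) {z : ℝ} (hz : |z| < 1) :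
    1 - ∑' n, z ^ n * p n = (1 - z) * ∑' n, z ^ n * u n := by
  have hsu : Summable fun n => z ^ n * u n := (summable_pow_mul_of_abs_le hu hz).of_norm
  have hsu' : Summable fun n => z ^ (n + 1) * u (n + 1) := (summable_nat_add_iff 1).mpr hsu
  have hshift : ∀ n, z ^ (n + 1) * p (n + 1) = z * (z ^ n * u n) - z ^ (n + 1) * u (n + 1) := by
    intro n
    rw [hp]
    ring
  have htail : ∑' n, z ^ (n + 1) * u (n + 1) = ∑' n, z ^ n * u n - 1 := by
    rw [hsu.tsum_eq_zero_add, pow_zero, hu0, one_mul, add_sub_cancel_left]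
  calc 1 - ∑' n, z ^ n * p n
      = 1 - ∑' n, (z * (z ^ n * u n) - z ^ (n + 1) * u (n + 1)) := by
        rw [tsum_eq_zero_add' (by simpa only [hshift] using (hsu.mul_left z).sub hsu'), hp0,
          mul_zero, zero_add, tsum_congr hshift]
    _ = (1 - z) * ∑' n, z ^ n * u n := by
        rw [(hsu.mul_left z).tsum_sub hsu', tsum_mul_left, htail]
        ring

lemma tsum_pow_mul_mul_tsum_pow_mul {u v : ℕ → ℝ} {C D : ℝ} (hu : ∀ n, |u n| ≤ C)
    (hv : ∀ n, |v n| ≤ D) (huv : ∀ n, ∑ k ∈ Finset.range (n + 1), u k * v (n - k) = 1)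
    {z : ℝ} (hz : |z| < 1) :
    (∑' n, z ^ n * u n) * ∑' n, z ^ n * v n = (1 - z)⁻¹ := by
  rw [tsum_mul_tsum_eq_tsum_sum_antidiagonal_of_summable_norm
    (summable_pow_mul_of_abs_le hu hz) (summable_pow_mul_of_abs_le hv hz),
    ← tsum_geometric_of_norm_lt_one (by rwa [Real.norm_eq_abs])]
  refine tsum_congr fun n => ?_
  rw [Finset.Nat.sum_antidiagonal_eq_sum_range_succ (fun i j => z ^ i * u i * (z ^ j * v j))]
  calc ∑ k ∈ Finset.range (n + 1), z ^ k * u k * (z ^ (n - k) * v (n - k))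
      = ∑ k ∈ Finset.range (n + 1), z ^ n * (u k * v (n - k)) := by
        refine Finset.sum_congr rfl fun k hk => ?_
        rw [← pow_mul_pow_sub z (Nat.le_of_lt_succ (Finset.mem_range.mp hk))]
        ring
    _ = z ^ n := by rw [← Finset.mul_sum, huv, mul_one]

noncomputable def stayProb (X : ℕ → Ω → ℝ) (A : Set ℝ) (n : ℕ) : ℝ :=
  (ℙ ((fun ω i => X i ω) ⁻¹' partialSumsIn A n)).toReal

def firstExit (X : ℕ → Ω → ℝ) (A : Set ℝ) (n : ℕ) : Set Ω :=
  {ω | 1 ≤ n ∧ walkSum X n ω ∉ A ∧ ∀ m, 1 ≤ m → m < n → walkSum X m ω ∈ A}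

section

variable {X : ℕ → Ω → ℝ}

lemma measure_revBelow_inter_shift (hmeas : ∀ i, Measurable (X i)) (hindep : iIndepFun X ℙ)
    {A B : Set ℝ} (hA : MeasurableSet A) (hB : MeasurableSet B) (k l : ℕ) :
    ℙ ((fun ω i => X (revBelow k i) ω) ⁻¹' partialSumsIn A k ∩
        (fun ω i => X (k + i) ω) ⁻¹' partialSumsIn B l)
      = ℙ ((fun ω i => X (revBelow k i) ω) ⁻¹' partialSumsIn A k) *
        ℙ ((fun ω i => X (k + i) ω) ⁻¹' partialSumsIn B l) := by
  have hblocks := indep_iSup_of_disjoint (fun i => (hmeas i).comap_le) hindep.iIndep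
    (Set.Iio_disjoint_Ici le_rfl : Disjoint (Iio k) (Ici k))
  have hX {S : Set ℕ} {i : ℕ} (hi : i ∈ S) :
      Measurable[⨆ j ∈ S, MeasurableSpace.comap (X j) inferInstance] (X i) :=
    measurable_iff_comap_le.2 <|
      le_iSup₂ (f := fun j (_ : j ∈ S) => MeasurableSpace.comap (X j) _) i hi
  refine (Indep_iff _ _ _).1 hblocks _ _
    (measurableSet_preimage_partialSumsIn (fun i hi => hX ?_) hA)
    (measurableSet_preimage_partialSumsIn (fun i _ => hX (Nat.le_add_right k i)) hB)
  rw [revBelow, if_pos hi, mem_Iio]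
  omega

variable [IsProbabilityMeasure (ℙ : Measure Ω)]

lemma abs_stayProb_le_one (X : ℕ → Ω → ℝ) (A : Set ℝ) (n : ℕ) : |stayProb X A n| ≤ 1 := by
  rw [stayProb, ← measureReal_def, abs_of_nonneg measureReal_nonneg]
  exact measureReal_le_one

lemma toReal_measure_firstExit_succ (hmeas : ∀ i, Measurable (X i)) {A : Set ℝ}
    (hA : MeasurableSet A) (n : ℕ) :
    (ℙ (firstExit X A (n + 1))).toReal = stayProb X A n - stayProb X A (n + 1) := by
  have hsub : partialSumsIn A (n + 1) ⊆ partialSumsIn A n := by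
    rw [partialSumsIn_succ]
    exact inter_subset_left
  rw [stayProb, stayProb, ← measureReal_def, ← measureReal_def, ← measureReal_def,
    ← measureReal_sdiff (preimage_mono hsub)
    (measurableSet_preimage_partialSumsIn (fun i _ => hmeas i) hA), ← preimage_sdiff,
    partialSumsIn_succ, sdiff_self_inter]
  congr 1
  ext ω
  simp only [firstExit, partialSumsIn, walkSum, mem_ofPred_eq, mem_preimage, mem_sdiff,
    Nat.lt_succ_iff, Nat.le_add_left, true_and, and_comm]

lemma one_sub_tsum_firstExit (hmeas : ∀ i, Measurable (X i)) {A : Set ℝ}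
    (hA : MeasurableSet A) {z : ℝ} (hz : |z| < 1) :
    1 - ∑' n, z ^ n * (ℙ (firstExit X A n)).toReal = (1 - z) * ∑' n, z ^ n * stayProb X A n :=
  one_sub_tsum_pow_mul_eq (abs_stayProb_le_one X A) (by simp [stayProb, partialSumsIn_zero])
    (by simp [firstExit]) (toReal_measure_firstExit_succ hmeas hA) hz

lemma one_sub_descLadderPGF (hmeas : ∀ i, Measurable (X i)) {z : ℝ} (hz : |z| < 1) :
    1 - descLadderPGF X z = (1 - z) * ∑' n, z ^ n * stayProb X (Ici 0) n := by
  simpa only [firstExit, descLadderPGF, mem_Ici, not_le] using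
    one_sub_tsum_firstExit hmeas measurableSet_Ici hz

lemma one_sub_ascLadderPGF (hmeas : ∀ i, Measurable (X i)) {z : ℝ} (hz : |z| < 1) :
    1 - ascLadderPGF X z = (1 - z) * ∑' n, z ^ n * stayProb X (Iio 0) n := by
  simpa only [firstExit, ascLadderPGF, mem_Iio, not_lt] using
    one_sub_tsum_firstExit hmeas measurableSet_Iio hz

lemma sum_stayProb_mul_stayProb (hmeas : ∀ i, Measurable (X i)) (hindep : iIndepFun X ℙ)
    (hident : ∀ i, IdentDistrib (X i) (X 0) ℙ ℙ) (n : ℕ) :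
    ∑ k ∈ Finset.range (n + 1), stayProb X (Iio 0) k * stayProb X (Ici 0) (n - k) = 1 := by
  -- `L k ∩ R k` is the event that `S_0, …, S_n` attains its minimum first at time `k`.
  set L := fun k => (fun ω i => X (revBelow k i) ω) ⁻¹' partialSumsIn (Iio 0) k
  set R := fun k => (fun ω i => X (k + i) ω) ⁻¹' partialSumsIn (Ici 0) (n - k)
  have hL (k : ℕ) : stayProb X (Iio 0) k = (ℙ (L k)).toReal := congrArg ENNReal.toReal
    ((identDistrib_comp_of_injective hmeas hindep hident (revBelow_injective k)).measure_mem_eq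
      (measurableSet_partialSumsIn measurableSet_Iio k)).symm
  have hR (k : ℕ) : stayProb X (Ici 0) (n - k) = (ℙ (R k)).toReal := congrArg ENNReal.toReal
    ((identDistrib_comp_of_injective hmeas hindep hident (add_right_injective k)).measure_mem_eq
      (measurableSet_partialSumsIn measurableSet_Ici _)).symm
  have hmem (ω : Ω) (k : ℕ) (hk : k ≤ n) : ω ∈ L k ∩ R k ↔
      (∀ j < k, walkSum X k ω < walkSum X j ω) ∧
        ∀ j, k < j → j ≤ n → walkSum X k ω ≤ walkSum X j ω := by
    have hleft := revBelow_mem_partialSumsIn_iff (x := fun i => X i ω) (A := Iio 0) (k := k)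
    have hright := shift_mem_partialSumsIn_iff (x := fun i => X i ω) (A := Ici 0) (k := k)
      (l := n - k)
    simp only [mem_Iio, mem_Ici, sub_neg, sub_nonneg, Nat.add_sub_cancel' hk] at hleft hright
    exact and_congr hleft hright
  calc ∑ k ∈ Finset.range (n + 1), stayProb X (Iio 0) k * stayProb X (Ici 0) (n - k)
      = ∑ k ∈ Finset.range (n + 1), (ℙ).real (L k ∩ R k) := by
        refine Finset.sum_congr rfl fun k _ => ?_
        rw [hL, hR, measureReal_def, measure_revBelow_inter_shift hmeas hindep measurableSet_Iio
          measurableSet_Ici, ENNReal.toReal_mul]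
    _ = 1 := by
        refine sum_measureReal_eq_one_of_existsUnique (fun k _ =>
          (measurableSet_preimage_partialSumsIn (fun i _ => hmeas _) measurableSet_Iio).inter
          (measurableSet_preimage_partialSumsIn (fun i _ => hmeas _) measurableSet_Ici))
          fun ω => (existsUnique_congr fun k => ?_).2
            (existsUnique_firstArgmin (fun m => walkSum X m ω) n)
        rw [Finset.mem_range, Nat.lt_succ_iff]
        exact ⟨fun ⟨hk, h⟩ => ⟨hk, (hmem ω k hk).1 h⟩, fun ⟨hk, h⟩ => ⟨hk, (hmem ω k hk).2 h⟩⟩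

end

end RandomWalk

/-- Duality (factorization) theorem: `(1 - r(z))(1 - a(z)) = 1 - z` for `|z| < 1`. -/
theorem ladder_epoch_duality
    [IsProbabilityMeasure (ℙ : Measure Ω)]
    (X : ℕ → Ω → ℝ)
    (hmeas : ∀ i, Measurable (X i))
    (hindep : iIndepFun X ℙ)
    (hident : ∀ i, IdentDistrib (X i) (X 0) ℙ ℙ) :
    ∀ z : ℝ, |z| < 1 →
      (1 - descLadderPGF X z) * (1 - ascLadderPGF X z) = 1 - z := by
  intro z hz
  have hz1 : 1 - z ≠ 0 := by linarith [(abs_lt.mp hz).2]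
  rw [RandomWalk.one_sub_descLadderPGF hmeas hz, RandomWalk.one_sub_ascLadderPGF hmeas hz,
    mul_mul_mul_comm, mul_comm (∑' n, z ^ n * RandomWalk.stayProb X (Ici 0) n),
    RandomWalk.tsum_pow_mul_mul_tsum_pow_mul (RandomWalk.abs_stayProb_le_one X _)
      (RandomWalk.abs_stayProb_le_one X _)
      (RandomWalk.sum_stayProb_mul_stayProb hmeas hindep hident) hz]
  field_simp
end
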